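/- arXiv:1510.03014 — 3 statements merged into one kernel-verified Lean document; each statement's English description precedes it below -/
import Mathlib

section
/- A norm bounded sequence (x_n) in a Banach space X converges weakly to x if and only if for every subsequence (x'_n) and every Banach limit LIM, the element of X** defined by x* ↦ LIM_n(x*(x'_n)) equals the canonical image of x in X**. -/
/-!
A Banach limit exists: take the limit of the Cesàro means along a free ultrafilter on `ℕ`.
The ultrafilter makes the limit exist (the means stay in a compact interval) and be linear and
positive; Cesàro averaging makes it shift invariant, because the averages of `f (n + 1) - f n`
telescope to `(f n - f 0) / n`.

If `x n ⇀ x₀`, then along any subsequence `φ (x (s n)) → φ x₀`, and a Banach limit extends `lim`.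
Conversely, the bounded real sequence `φ (x n)` tends to `φ x₀` as soon as each of its
convergent subsequences does; if `φ (x (s n)) → b`, the functional `ψ ↦ L (ψ (x (s n)))ₙ`
is the canonical image of `x₀` by hypothesis, and evaluating it at `φ` gives `b = φ x₀`.
-/

noncomputable section
open Filter

/-- A Banach limit: positive, shift-invariant, normalized linear functional on
bounded sequences, extending the usual limit. -/
structure BanachLimit where
  toFun : BoundedContinuousFunction ℕ ℝ → ℝ
  map_add' : ∀ f g, toFun (f + g) = toFun f + toFun g
  map_smul' : ∀ (c : ℝ) f, toFun (c • f) = c * toFun f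
  pos' : ∀ f, (∀ n, 0 ≤ f n) → 0 ≤ toFun f
  shift' : ∀ f : BoundedContinuousFunction ℕ ℝ,
    toFun (f.compContinuous ⟨fun n => n + 1, continuous_of_discreteTopology⟩) = toFun f
  one' : toFun 1 = 1
  lim' : ∀ (f : BoundedContinuousFunction ℕ ℝ) (a : ℝ),
    Tendsto (fun n => f n) atTop (nhds a) → toFun f = a

/-- The bounded continuous function on `ℕ` associated with a bounded sequence. -/
def bseq (f : ℕ → ℝ) (h : ∃ C, ∀ n, |f n| ≤ C) : BoundedContinuousFunction ℕ ℝ :=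
  ⟨⟨f, continuous_of_discreteTopology⟩, by
    obtain ⟨C, hC⟩ := h
    exact ⟨C + C, fun x y => by
      rw [Real.dist_eq]
      exact (abs_sub _ _).trans (add_le_add (hC x) (hC y))⟩⟩

open Topology

def cesaroMean (u : ℕ → ℝ) (n : ℕ) : ℝ := (n : ℝ)⁻¹ * ∑ i ∈ Finset.range n, u i

lemma cesaroMean_add (u v : ℕ → ℝ) : cesaroMean (u + v) = cesaroMean u + cesaroMean v := by
  ext n
  simp only [cesaroMean, Pi.add_apply, Finset.sum_add_distrib, mul_add]

lemma cesaroMean_const_mul (c : ℝ) (u : ℕ → ℝ) :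
    cesaroMean (fun n => c * u n) = fun n => c * cesaroMean u n := by
  ext n
  simp only [cesaroMean, ← Finset.mul_sum]
  ring

lemma cesaroMean_nonneg {u : ℕ → ℝ} (hu : ∀ n, 0 ≤ u n) (n : ℕ) : 0 ≤ cesaroMean u n :=
  mul_nonneg (by positivity) (Finset.sum_nonneg fun i _ => hu i)

lemma norm_cesaroMean_le {u : ℕ → ℝ} {C : ℝ} (hu : ∀ n, ‖u n‖ ≤ C) (n : ℕ) :
    ‖cesaroMean u n‖ ≤ C := by
  rcases Nat.eq_zero_or_pos n with rfl | hn
  · simpa [cesaroMean] using (norm_nonneg _).trans (hu 0)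
  have hn' : (0 : ℝ) < n := by exact_mod_cast hn
  calc ‖cesaroMean u n‖ = (n : ℝ)⁻¹ * ‖∑ i ∈ Finset.range n, u i‖ := by
        rw [cesaroMean, norm_mul, norm_inv, RCLike.norm_natCast]
    _ ≤ (n : ℝ)⁻¹ * (n * C) := by
        gcongr
        simpa using norm_sum_le_of_le (Finset.range n) fun i _ => hu i
    _ = C := by field_simp

lemma tendsto_cesaroMean_shift_sub {u : ℕ → ℝ} {C : ℝ} (hu : ∀ n, ‖u n‖ ≤ C) :
    Tendsto (fun n => cesaroMean (fun i => u (i + 1)) n - cesaroMean u n) atTop (𝓝 0) := by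
  have htel : ∀ n, cesaroMean (fun i => u (i + 1)) n - cesaroMean u n =
      (n : ℝ)⁻¹ * (u n - u 0) := fun n => by
    rw [cesaroMean, cesaroMean, ← mul_sub, ← Finset.sum_sub_distrib, Finset.sum_range_sub]
  simp only [htel]
  refine squeeze_zero_norm (a := fun n : ℕ => (n : ℝ)⁻¹ * (C + C)) (fun n => ?_)
    (by simpa using (tendsto_inv_atTop_nhds_zero_nat (𝕜 := ℝ)).mul_const (C + C))
  rw [norm_mul, norm_inv, RCLike.norm_natCast]
  gcongr
  exact (norm_sub_le _ _).trans (add_le_add (hu n) (hu 0))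

lemma Ultrafilter.exists_tendsto_of_isCompact {α X : Type*} [TopologicalSpace X]
    (U : Ultrafilter α) {K : Set X} (hK : IsCompact K) {u : α → X} (hu : ∀ i, u i ∈ K) :
    ∃ a, Tendsto u U (𝓝 a) := by
  obtain ⟨a, -, ha⟩ :=
    hK.ultrafilter_le_nhds' (U.map u) (Eventually.of_forall (f := (U : Filter α)) hu)
  exact ⟨a, ha⟩

lemma tendsto_of_forall_subseq_tendsto_eq {X : Type*} [TopologicalSpace X]
    [FirstCountableTopology X] {K : Set X} (hK : IsCompact K) {u : ℕ → X} (hu : ∀ n, u n ∈ K)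
    {a : X} (h : ∀ s : ℕ → ℕ, StrictMono s → ∀ b, Tendsto (u ∘ s) atTop (𝓝 b) → b = a) :
    Tendsto u atTop (𝓝 a) :=
  hK.tendsto_nhds_of_unique_mapClusterPt (Eventually.of_forall hu) fun _ _ hb =>
    let ⟨s, hs, hsb⟩ := hb.tendsto_subseq
    h s hs _ hsb

lemma exists_abs_apply_le {X : Type*} [NormedAddCommGroup X] [NormedSpace ℝ X]
    (φ : StrongDual ℝ X) {y : ℕ → X} (hy : ∃ C, ∀ n, ‖y n‖ ≤ C) : ∃ C, ∀ n, |φ (y n)| ≤ C :=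
  let ⟨_, hC⟩ := hy
  ⟨_, fun n => φ.le_opNorm_of_le (hC n)⟩

namespace BanachLimit

def cesaroHyperlimit (f : BoundedContinuousFunction ℕ ℝ) : ℝ :=
  limUnder (hyperfilter ℕ) (cesaroMean f)

lemma tendsto_cesaroHyperlimit (f : BoundedContinuousFunction ℕ ℝ) :
    Tendsto (cesaroMean f) (hyperfilter ℕ) (𝓝 (cesaroHyperlimit f)) :=
  tendsto_nhds_limUnder <|
    (hyperfilter ℕ).exists_tendsto_of_isCompact (isCompact_closedBall 0 ‖f‖) fun n =>
      mem_closedBall_zero_iff.2 (norm_cesaroMean_le f.norm_coe_le_norm n)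

lemma cesaroHyperlimit_eq_of_tendsto {f : BoundedContinuousFunction ℕ ℝ} {a : ℝ}
    (h : Tendsto (fun n => f n) atTop (𝓝 a)) : cesaroHyperlimit f = a :=
  (h.cesaro.mono_left Nat.hyperfilter_le_atTop).limUnder_eq

def cesaro : BanachLimit where
  toFun := cesaroHyperlimit
  map_add' f g := by
    rw [cesaroHyperlimit, BoundedContinuousFunction.coe_add, cesaroMean_add]
    exact ((tendsto_cesaroHyperlimit f).add (tendsto_cesaroHyperlimit g)).limUnder_eq
  map_smul' c f := by
    rw [cesaroHyperlimit, BoundedContinuousFunction.coe_smul]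
    exact (cesaroMean_const_mul c f ▸ (tendsto_cesaroHyperlimit f).const_mul c).limUnder_eq
  pos' f hf := ge_of_tendsto' (tendsto_cesaroHyperlimit f) (cesaroMean_nonneg hf)
  shift' f := by
    have h := ((tendsto_cesaroMean_shift_sub f.norm_coe_le_norm).mono_left
      Nat.hyperfilter_le_atTop).add (tendsto_cesaroHyperlimit f)
    rw [zero_add] at h
    exact (h.congr fun n => sub_add_cancel _ _).limUnder_eq
  one' := cesaroHyperlimit_eq_of_tendsto tendsto_const_nhds
  lim' _ _ := cesaroHyperlimit_eq_of_tendsto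

variable (L : BanachLimit)

lemma le_toFun_of_forall_le {f : BoundedContinuousFunction ℕ ℝ} {c : ℝ} (h : ∀ n, c ≤ f n) :
    c ≤ L.toFun f := by
  have hpos := L.pos' (f + (-c) • 1) fun n => by simpa using h n
  rw [L.map_add', L.map_smul', L.one'] at hpos
  linarith

lemma norm_toFun_le (f : BoundedContinuousFunction ℕ ℝ) : ‖L.toFun f‖ ≤ ‖f‖ := by
  have hneg : L.toFun (-f) = -L.toFun f := by
    rw [← neg_one_smul ℝ f, L.map_smul', neg_one_mul]
  have lower := L.le_toFun_of_forall_le fun n => neg_le_of_abs_le (f.norm_coe_le_norm n)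
  have upper := L.le_toFun_of_forall_le (f := -f) fun n =>
    neg_le_neg (le_of_abs_le (f.norm_coe_le_norm n))
  rw [hneg] at upper
  exact abs_le.2 ⟨lower, by linarith⟩

variable {X : Type*} [NormedAddCommGroup X] [NormedSpace ℝ X]

def toBidual (y : ℕ → X) (hy : ∃ C, ∀ n, ‖y n‖ ≤ C) : StrongDual ℝ (StrongDual ℝ X) :=
  LinearMap.mkContinuousOfExistsBound
    { toFun := fun φ => L.toFun (bseq (fun n => φ (y n)) (exists_abs_apply_le φ hy))
      map_add' := fun φ ψ => by rw [← L.map_add']; rfl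
      map_smul' := fun c φ => by rw [RingHom.id_apply, smul_eq_mul, ← L.map_smul']; rfl }
    (by
      obtain ⟨C, hC⟩ := hy
      have hC0 : 0 ≤ C := (norm_nonneg _).trans (hC 0)
      refine ⟨C, fun φ => (L.norm_toFun_le _).trans <|
        (BoundedContinuousFunction.norm_le (by positivity)).2 fun n => ?_⟩
      rw [mul_comm]
      exact φ.le_opNorm_of_le (hC n))

lemma toBidual_apply (y : ℕ → X) (hy : ∃ C, ∀ n, ‖y n‖ ≤ C) (φ : StrongDual ℝ X)
    (h : ∃ C, ∀ n, |φ (y n)| ≤ C) : L.toBidual y hy φ = L.toFun (bseq (fun n => φ (y n)) h) :=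
  rfl

end BanachLimit

theorem weak_convergence_iff_banachLimit_general {X : Type*} [NormedAddCommGroup X]
    [NormedSpace ℝ X] (x : ℕ → X) (x₀ : X)
    (hb : ∃ C, ∀ n, ‖x n‖ ≤ C) :
    (∀ φ : StrongDual ℝ X,
        Tendsto (fun n => φ (x n)) atTop (nhds (φ x₀)))
      ↔ ∀ (s : ℕ → ℕ), StrictMono s → ∀ L : BanachLimit,
          ∀ xdd : StrongDual ℝ (StrongDual ℝ X),
            (∀ (φ : StrongDual ℝ X) (h : ∃ C, ∀ n, |φ (x (s n))| ≤ C),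
              xdd φ = L.toFun (bseq (fun n => φ (x (s n))) h)) →
            xdd = NormedSpace.inclusionInDoubleDual ℝ X x₀ := by
  obtain ⟨C, hC⟩ := hb
  have hbs : ∀ s : ℕ → ℕ, ∃ C, ∀ n, ‖x (s n)‖ ≤ C := fun s => ⟨C, fun n => hC (s n)⟩
  constructor
  · intro hweak s hs L xdd hxdd
    ext φ
    rw [hxdd φ (exists_abs_apply_le φ (hbs s)), NormedSpace.dual_def]
    exact L.lim' _ _ ((hweak φ).comp hs.tendsto_atTop)
  · intro hlim φ
    refine tendsto_of_forall_subseq_tendsto_eq (isCompact_closedBall 0 (‖φ‖ * C))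
      (fun n => mem_closedBall_zero_iff.2 (φ.le_opNorm_of_le (hC n))) fun s hs b hsb => ?_
    let L := BanachLimit.cesaro
    have hxdd := hlim s hs L (L.toBidual (x ∘ s) (hbs s)) (L.toBidual_apply _ _)
    calc b = L.toBidual (x ∘ s) (hbs s) φ := (L.lim' _ _ hsb).symm
      _ = φ x₀ := by rw [hxdd, NormedSpace.dual_def]

/-- A norm bounded sequence `(x n)` in a Banach space converges weakly to
`x₀` iff for every subsequence and every Banach limit `L`, the element of `X**` given by
`φ ↦ L (φ (x (s n)))ₙ` equals the canonical image of `x₀` in `X**`. -/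
theorem weak_convergence_iff_banachLimit {X : Type*} [NormedAddCommGroup X]
    [NormedSpace ℝ X] [CompleteSpace X] (x : ℕ → X) (x₀ : X)
    (hb : ∃ C, ∀ n, ‖x n‖ ≤ C) :
    (∀ φ : StrongDual ℝ X,
        Tendsto (fun n => φ (x n)) atTop (nhds (φ x₀)))
      ↔ ∀ (s : ℕ → ℕ), StrictMono s → ∀ L : BanachLimit,
          ∀ xdd : StrongDual ℝ (StrongDual ℝ X),
            (∀ (φ : StrongDual ℝ X) (h : ∃ C, ∀ n, |φ (x (s n))| ≤ C),
              xdd φ = L.toFun (bseq (fun n => φ (x (s n))) h)) →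
            xdd = NormedSpace.inclusionInDoubleDual ℝ X x₀ :=
  weak_convergence_iff_banachLimit_general x x₀ hb
end
end

section
/- Let K be a relatively weakly compact subset of a Banach space X, let (x_n) be a sequence in K, and let LIM be a Banach limit. Then the element of X** defined by x* ↦ LIM_n(x*(x_n)) lies in (the canonical image of) the intersection over all i of the norm-closed convex hulls of {x_i, x_{i+1}, ...}. -/
/-!
The functional `f ↦ LIM_n f(x_n)` is positive and normalized on `C(W)`, where `W` is the weak
closure of `{x_n}`, a compact Hausdorff space; by Riesz–Markov–Kakutani it is integration against
a probability measure `μ` on `W`. The inclusion `W → X` is weakly continuous and lands in the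
closed span of `{x_n}`, a separable space, so it is strongly measurable (closed balls are weakly
closed) and norm bounded (uniform boundedness). Its Bochner integral `y` satisfies
`φ y = ∫ φ dμ = LIM_n φ(x_n)` and lies in the closed convex hull of `W`, which is the norm-closed
convex hull of `{x_n}`. Applying this to every tail `(x_{n+i})_n` gives points `y_i` in the hull
of that tail which all represent the same functional, by shift invariance of `LIM`; so they
coincide.
-/

noncomputable section
open Filter

open MeasureTheory TopologicalSpace Set BoundedContinuousFunction

theorem measurable_of_measurableSet_preimage_ball {α β : Type*} [MeasurableSpace α]
    [PseudoMetricSpace β] [SecondCountableTopology β] [MeasurableSpace β] [BorelSpace β]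
    {f : α → β} (hf : ∀ c r, MeasurableSet (f ⁻¹' Metric.ball c r)) : Measurable f := by
  have hbasis : IsTopologicalBasis {s : Set β | ∃ c r, s = Metric.ball c r} :=
    isTopologicalBasis_of_isOpen_of_nhds (by rintro _ ⟨c, r, rfl⟩; exact Metric.isOpen_ball)
      fun a u ha hu => by
        obtain ⟨ε, hε, hball⟩ := Metric.isOpen_iff.1 hu a ha
        exact ⟨_, ⟨a, ε, rfl⟩, Metric.mem_ball_self hε, hball⟩
  rw [BorelSpace.measurable_eq (α := β), hbasis.borel_eq_generateFrom]
  exact measurable_generateFrom (by rintro _ ⟨c, r, rfl⟩; exact hf c r)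

section Barycenter

variable {X : Type*} [NormedAddCommGroup X] [NormedSpace ℝ X]

theorem isClosed_toWeakSpace_image_closedBall (c : X) (r : ℝ) :
    IsClosed (toWeakSpace ℝ X '' Metric.closedBall c r) := by
  have h := (convex_closedBall c r).toWeakSpace_closure ℝ
  rw [Metric.isClosed_closedBall.closure_eq] at h
  rw [h]
  exact isClosed_closure

variable {S : Type*} [TopologicalSpace S] {g : S → X}

theorem Continuous.dual_apply_of_toWeakSpace (hg : Continuous fun s => toWeakSpace ℝ X (g s))
    (φ : StrongDual ℝ X) : Continuous fun s => φ (g s) :=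
  (WeakBilin.eval_continuous _ φ).comp hg

theorem exists_norm_le_of_continuous_toWeakSpace [CompactSpace S]
    (hg : Continuous fun s => toWeakSpace ℝ X (g s)) : ∃ C, ∀ s, ‖g s‖ ≤ C := by
  have hbdd : ∀ φ : StrongDual ℝ X, ∃ C, ∀ s, ‖NormedSpace.inclusionInDoubleDualLi ℝ (g s) φ‖ ≤ C :=
    fun φ => (isCompact_univ.exists_bound_of_continuousOn
      (hg.dual_apply_of_toWeakSpace φ).continuousOn).imp fun C hC s => hC s (mem_univ s)
  obtain ⟨C, hC⟩ := banach_steinhaus hbdd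
  exact ⟨C, fun s => (NormedSpace.inclusionInDoubleDualLi ℝ).norm_map (g s) ▸ hC s⟩

theorem StronglyMeasurable.of_continuous_toWeakSpace [MeasurableSpace S] [OpensMeasurableSpace S]
    (hg : Continuous fun s => toWeakSpace ℝ X (g s)) (hsep : IsSeparable (range g)) :
    StronglyMeasurable g := by
  have : SeparableSpace (range g) := hsep.separableSpace
  let : MeasurableSpace (range g) := borel _
  have : BorelSpace (range g) := ⟨rfl⟩
  have hdist (c : X) : Measurable fun s => dist (g s) c := by
    refine LowerSemicontinuous.measurable (lowerSemicontinuous_iff_isClosed_preimage.2 fun r => ?_)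
    have hpre : (fun s => dist (g s) c) ⁻¹' Iic r
        = (fun s => toWeakSpace ℝ X (g s)) ⁻¹' (toWeakSpace ℝ X '' Metric.closedBall c r) := by
      ext s
      simp [(toWeakSpace ℝ X).injective.mem_set_image]
    rw [hpre]
    exact (isClosed_toWeakSpace_image_closedBall c r).preimage hg
  have hfac : Measurable (rangeFactorization g) :=
    measurable_of_measurableSet_preimage_ball fun c r => measurableSet_lt (hdist c) measurable_const
  exact continuous_subtype_val.comp_stronglyMeasurable hfac.stronglyMeasurable

theorem exists_isProbabilityMeasure_integral_eq [T2Space S] [CompactSpace S] [MeasurableSpace S]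
    [BorelSpace S] (Λ : C(S, ℝ) →ₚ[ℝ] ℝ) (hΛ : Λ 1 = 1) :
    ∃ μ : Measure S, IsProbabilityMeasure μ ∧ ∀ f : C(S, ℝ), ∫ s, f s ∂μ = Λ f := by
  let Λc : CompactlySupportedContinuousMap S ℝ →ₚ[ℝ] ℝ :=
    { toFun f := Λ f.toContinuousMap
      map_add' f g := map_add Λ _ _
      map_smul' c f := map_smul Λ c _
      monotone' f g hfg := Λ.monotone' hfg }
  have hint (f : C(S, ℝ)) : ∫ s, f s ∂(RealRMK.rieszMeasure Λc) = Λ f :=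
    RealRMK.integral_rieszMeasure Λc ⟨f, .of_compactSpace f⟩
  have hmass : (RealRMK.rieszMeasure Λc).real univ = 1 := by simpa [hΛ] using hint 1
  exact ⟨_, ⟨(ENNReal.toReal_eq_one_iff _).1 hmass⟩, hint⟩

theorem exists_mem_closedConvexHull_forall_dual_eq [CompleteSpace X] [T2Space S] [CompactSpace S]
    (hg : Continuous fun s => toWeakSpace ℝ X (g s)) (hsep : IsSeparable (range g))
    (Λ : C(S, ℝ) →ₚ[ℝ] ℝ) (hΛ : Λ 1 = 1) :
    ∃ y ∈ closedConvexHull ℝ (range g), ∀ φ : StrongDual ℝ X,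
      φ y = Λ ⟨fun s => φ (g s), hg.dual_apply_of_toWeakSpace φ⟩ := by
  borelize S
  obtain ⟨μ, hμ, hint⟩ := exists_isProbabilityMeasure_integral_eq Λ hΛ
  obtain ⟨C, hC⟩ := exists_norm_le_of_continuous_toWeakSpace hg
  have hgi : Integrable g μ :=
    .of_bound (StronglyMeasurable.of_continuous_toWeakSpace hg hsep).aestronglyMeasurable C
      (.of_forall hC)
  refine ⟨∫ s, g s ∂μ, convex_closedConvexHull.integral_mem isClosed_closedConvexHull
    (.of_forall fun s => subset_closedConvexHull ⟨s, rfl⟩) hgi, fun φ => ?_⟩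
  rw [← φ.integral_comp_comm hgi]
  exact hint ⟨fun s => φ (g s), hg.dual_apply_of_toWeakSpace φ⟩

end Barycenter

lemma range_comp_add_right {α : Type*} (x : ℕ → α) (i : ℕ) :
    range (fun n => x (n + i)) = {z | ∃ j, i ≤ j ∧ z = x j} := by
  ext z
  constructor
  · rintro ⟨n, rfl⟩
    exact ⟨n + i, by omega, rfl⟩
  · rintro ⟨j, hij, rfl⟩
    exact ⟨j - i, congrArg x (Nat.sub_add_cancel hij)⟩

namespace BanachLimit

variable (L : BanachLimit)

def toLinearMap : (ℕ →ᵇ ℝ) →ₗ[ℝ] ℝ where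
  toFun := L.toFun
  map_add' := L.map_add'
  map_smul' := L.map_smul'

def along {S : Type*} [TopologicalSpace S] [CompactSpace S] (p : ℕ → S) : C(S, ℝ) →ₚ[ℝ] ℝ :=
  .mk₀ (L.toLinearMap ∘ₗ (compContinuousCLM ℝ ℝ ⟨p, continuous_of_discreteTopology⟩).toLinearMap
      ∘ₗ (ContinuousMap.linearIsometryBoundedOfCompact S ℝ ℝ).toLinearMap)
    fun _ hf => L.pos' _ fun n => hf (p n)

lemma along_one {S : Type*} [TopologicalSpace S] [CompactSpace S] (p : ℕ → S) :
    L.along p 1 = 1 :=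
  L.one'

lemma apply_compContinuous_add (f : ℕ →ᵇ ℝ) (i : ℕ) :
    L.toFun (f.compContinuous ⟨(· + i), continuous_of_discreteTopology⟩) = L.toFun f := by
  induction i with
  | zero => rfl
  | succ i ih =>
    refine .trans (congrArg L.toFun ?_) ((L.shift' _).trans ih)
    ext n
    simp only [compContinuous_apply, ContinuousMap.coe_mk, add_right_comm _ 1, add_assoc]

theorem exists_mem_closure_convexHull_range {X : Type*} [NormedAddCommGroup X]
    [NormedSpace ℝ X] [CompleteSpace X] {x : ℕ → X}
    (hx : IsCompact (closure (toWeakSpace ℝ X '' range x))) :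
    ∃ y ∈ closure (convexHull ℝ (range x)), ∀ (φ : StrongDual ℝ X) hb,
      φ y = L.toFun (bseq (fun n => φ (x n)) hb) := by
  set W := closure (toWeakSpace ℝ X '' range x)
  have : CompactSpace W := isCompact_iff_compactSpace.mp hx
  let g : W → X := fun w => (toWeakSpace ℝ X).symm w
  have hg : Continuous fun w => toWeakSpace ℝ X (g w) := continuous_subtype_val
  have hrange : range g ⊆ closure (convexHull ℝ (range x)) := by
    rintro _ ⟨⟨w, hw⟩, rfl⟩
    have hW : W ⊆ toWeakSpace ℝ X '' closure (convexHull ℝ (range x)) := by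
      rw [(convex_convexHull ℝ _).toWeakSpace_closure ℝ]
      exact closure_mono (image_mono (subset_convexHull ℝ _))
    obtain ⟨z, hz, rfl⟩ := hW hw
    simpa [g] using hz
  have hsep : IsSeparable (range g) :=
    (countable_range x).isSeparable.span.closure.mono
      (hrange.trans (closure_mono (convexHull_min Submodule.subset_span (Submodule.convex _))))
  let p : ℕ → W := fun n => ⟨toWeakSpace ℝ X (x n), subset_closure (mem_image_of_mem _ ⟨n, rfl⟩)⟩
  obtain ⟨y, hy, hφ⟩ :=
    exists_mem_closedConvexHull_forall_dual_eq hg hsep (L.along p) (L.along_one p)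
  exact ⟨y, closedConvexHull_min hrange (convex_convexHull ℝ _).closure isClosed_closure hy,
    fun φ _ => hφ φ⟩

end BanachLimit

/-- If `K` is relatively weakly compact in a Banach space `X`, `(x n)` a
sequence in `K` and `L` a Banach limit, then the element of `X**` given by
`φ ↦ L (φ (x n))ₙ` is the canonical image of some `y` lying in every norm-closed convex
hull `cco {x i, x (i+1), ...}`. -/
theorem banachLimit_mem_iInter_closedConvexHull {X : Type*} [NormedAddCommGroup X]
    [NormedSpace ℝ X] [CompleteSpace X] (K : Set X)
    (hK : IsCompact (closure ((toWeakSpace ℝ X) '' K)))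
    (x : ℕ → X) (hx : ∀ n, x n ∈ K) (L : BanachLimit)
    (hφb : ∀ φ : StrongDual ℝ X, ∃ C, ∀ n, |φ (x n)| ≤ C) :
    ∃ y : X, (∀ i : ℕ, y ∈ closure (convexHull ℝ {z | ∃ j, i ≤ j ∧ z = x j})) ∧
      ∀ φ : StrongDual ℝ X,
        NormedSpace.inclusionInDoubleDual ℝ X y φ
          = L.toFun (bseq (fun n => φ (x n)) (hφb φ)) := by
  have htail (i : ℕ) : ∃ y ∈ closure (convexHull ℝ {z | ∃ j, i ≤ j ∧ z = x j}),
      ∀ φ : StrongDual ℝ X, φ y = L.toFun (bseq (fun n => φ (x n)) (hφb φ)) := by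
    obtain ⟨y, hy, hφ⟩ := L.exists_mem_closure_convexHull_range (x := fun n => x (n + i))
      (hK.of_isClosed_subset isClosed_closure
        (closure_mono (image_mono (range_subset_iff.2 fun n => hx (n + i)))))
    exact ⟨y, range_comp_add_right x i ▸ hy, fun φ => (hφ φ ((hφb φ).imp fun C hC n => hC (n + i))).trans
      (L.apply_compContinuous_add (bseq _ (hφb φ)) i)⟩
  choose y hy hφy using htail
  have hconst (i : ℕ) : y i = y 0 :=
    SeparatingDual.eq_iff_forall_dual_eq.2 fun φ => (hφy i φ).trans (hφy 0 φ).symm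
  exact ⟨y 0, fun i => hconst i ▸ hy i, hφy 0⟩
end
end

section
/- The space ba(𝒜) of bounded finitely additive real-valued set functions on an algebra of sets 𝒜, equipped with the total variation norm, is a Banach lattice possessing property (P): every increasing, norm bounded net in ba(𝒜) has a least upper bound to which it converges in the total variation norm. -/
noncomputable section
open Filter Set

variable {Ω : Type}

/-- `C` is an algebra of subsets of `Ω`. -/
def IsSetAlg (C : Set (Set Ω)) : Prop :=
  ∅ ∈ C ∧ (∀ A ∈ C, Aᶜ ∈ C) ∧ ∀ A ∈ C, ∀ B ∈ C, A ∪ B ∈ C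

/-- `μ` is finitely additive on the algebra `C`. -/
def IsFinAdd (C : Set (Set Ω)) (μ : Set Ω → ℝ) : Prop :=
  μ ∅ = 0 ∧ ∀ A ∈ C, ∀ B ∈ C, Disjoint A B → μ (A ∪ B) = μ A + μ B

/-- `π` is a partition of `A` into finitely many members of `C`. -/
def IsPartition (C : Set (Set Ω)) (π : Finset (Set Ω)) (A : Set Ω) : Prop :=
  (∀ E ∈ π, E ∈ C) ∧ (π : Set (Set Ω)).PairwiseDisjoint id ∧
    ⋃₀ (π : Set (Set Ω)) = A

/-- The set of partial variation sums of `μ` over finite `C`-partitions of `A`. -/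
def varSums (C : Set (Set Ω)) (μ : Set Ω → ℝ) (A : Set Ω) : Set ℝ :=
  {x | ∃ π : Finset (Set Ω), IsPartition C π A ∧ x = ∑ E ∈ π, |μ E|}

/-- The total variation `|μ|(A)`. -/
def totalVar (C : Set (Set Ω)) (μ : Set Ω → ℝ) (A : Set Ω) : ℝ :=
  sSup (varSums C μ A)

/-- The total variation norm `‖μ‖ = |μ|(Ω)`. -/
def tvNorm (C : Set (Set Ω)) (μ : Set Ω → ℝ) : ℝ :=
  totalVar C μ univ

/-- `μ` has bounded total variation. -/
def BddVar (C : Set (Set Ω)) (μ : Set Ω → ℝ) : Prop :=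
  BddAbove (varSums C μ univ)

/-- `μ ∈ ba(C)`: finitely additive with bounded total variation. -/
def Memba (C : Set (Set Ω)) (μ : Set Ω → ℝ) : Prop :=
  IsFinAdd C μ ∧ BddVar C μ

/-- The lattice infimum `μ ∧ ν` in `ba(C)`. -/
def baInf (C : Set (Set Ω)) (μ ν : Set Ω → ℝ) (A : Set Ω) : ℝ :=
  sInf {x | ∃ B ∈ C, x = μ (A ∩ B) + ν (A ∩ Bᶜ)}

/-- `l` is a finitely additive probability on `C`. -/
def IsFAProb (C : Set (Set Ω)) (l : Set Ω → ℝ) : Prop :=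
  Memba C l ∧ (∀ A ∈ C, 0 ≤ l A) ∧ l univ = 1

/-- `ξ ≪ l` : (ε-δ) absolute continuity. -/
def AbsCont (C : Set (Set Ω)) (ξ l : Set Ω → ℝ) : Prop :=
  ∀ ε > (0:ℝ), ∃ δ > (0:ℝ), ∀ A ∈ C, l A < δ → totalVar C ξ A < ε

/-- The tail sets `{F n, F (n+1), ...}` of a sequence of set functions. -/
def tailSet (F : ℕ → Set Ω → ℝ) (n : ℕ) : Set (Set Ω → ℝ) :=
  {g | ∃ i, n ≤ i ∧ g = F i}

/-!
Put `μ A := ⨆ a, F a A`. For each `A` in the algebra the real net `a ↦ F a A` is increasing and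
bounded by `|F a A| ≤ ‖F a‖ ≤ M`, so it converges to `μ A`. Finite additivity and the bound `M`
on the variation sums pass to these pointwise limits, so `μ ∈ ba`, and it is the least upper bound
by construction. Finally `μ - F a` is finitely additive and nonnegative, so its total variation is
just its value `μ Ω - F a Ω`, which tends to `0`.
-/

open scoped Topology

variable {C : Set (Set Ω)}

namespace IsSetAlg

lemma univ_mem (hC : IsSetAlg C) : (univ : Set Ω) ∈ C := by
  simpa using hC.2.1 ∅ hC.1

lemma sUnion_mem (hC : IsSetAlg C) {π : Finset (Set Ω)} (hπ : ∀ E ∈ π, E ∈ C) :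
    ⋃₀ (π : Set (Set Ω)) ∈ C := by
  induction π using Finset.induction_on with
  | empty => simpa using hC.1
  | insert E π _ ih =>
    rw [Finset.coe_insert, sUnion_insert]
    exact hC.2.2 _ (hπ E (Finset.mem_insert_self _ _)) _
      (ih fun B hB => hπ B (Finset.mem_insert_of_mem hB))

lemma isPartition_pair (hC : IsSetAlg C) {A : Set Ω} (hA : A ∈ C) :
    IsPartition C {A, Aᶜ} univ := by
  refine ⟨?_, ?_, ?_⟩
  · simp only [Finset.mem_insert, Finset.mem_singleton, forall_eq_or_imp, forall_eq]
    exact ⟨hA, hC.2.1 A hA⟩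
  · rw [Finset.coe_pair]
    exact pairwise_pair.2 fun _ => ⟨disjoint_compl_right, disjoint_compl_left⟩
  · rw [Finset.coe_pair, sUnion_pair, union_compl_self]

end IsSetAlg

namespace IsFinAdd

lemma sub {μ ν : Set Ω → ℝ} (hμ : IsFinAdd C μ) (hν : IsFinAdd C ν) :
    IsFinAdd C (fun A => μ A - ν A) :=
  ⟨by simp [hμ.1, hν.1], fun A hA B hB hAB => by
    simp only [hμ.2 A hA B hB hAB, hν.2 A hA B hB hAB]; ring⟩

lemma sum_eq_sUnion (hC : IsSetAlg C) {μ : Set Ω → ℝ} (hμ : IsFinAdd C μ)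
    {π : Finset (Set Ω)} (hπC : ∀ E ∈ π, E ∈ C) (hπd : (π : Set (Set Ω)).PairwiseDisjoint id) :
    ∑ E ∈ π, μ E = μ (⋃₀ (π : Set (Set Ω))) := by
  induction π using Finset.induction_on with
  | empty => simpa using hμ.1.symm
  | insert E π hE ih =>
    rw [Finset.coe_insert] at hπd
    have hπC' : ∀ B ∈ π, B ∈ C := fun B hB => hπC B (Finset.mem_insert_of_mem hB)
    have hdisj : Disjoint E (⋃₀ (π : Set (Set Ω))) :=
      disjoint_sUnion_right.2 fun B hB =>
        hπd (mem_insert E _) (mem_insert_of_mem E hB) fun h => hE (h ▸ hB)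
    rw [Finset.sum_insert hE, Finset.coe_insert, sUnion_insert,
      hμ.2 E (hπC E (Finset.mem_insert_self _ _)) _ (hC.sUnion_mem hπC') hdisj,
      ih hπC' (hπd.subset (subset_insert _ _))]

lemma of_tendsto {ι : Type*} {l : Filter ι} [l.NeBot] (hC : IsSetAlg C)
    {F : ι → Set Ω → ℝ} {μ : Set Ω → ℝ} (hF : ∀ a, IsFinAdd C (F a))
    (hlim : ∀ A ∈ C, Tendsto (fun a => F a A) l (𝓝 (μ A))) : IsFinAdd C μ := by
  refine ⟨tendsto_nhds_unique (hlim ∅ hC.1) ?_, fun A hA B hB hAB =>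
    tendsto_nhds_unique (hlim _ (hC.2.2 A hA B hB)) ?_⟩
  · simpa only [fun a => (hF a).1] using tendsto_const_nhds
  · exact ((hlim A hA).add (hlim B hB)).congr fun a => ((hF a).2 A hA B hB hAB).symm

end IsFinAdd

lemma sum_abs_le_tvNorm {μ : Set Ω → ℝ} (hμ : BddVar C μ) {π : Finset (Set Ω)}
    (hπ : IsPartition C π univ) : ∑ E ∈ π, |μ E| ≤ tvNorm C μ :=
  le_csSup hμ ⟨π, hπ, rfl⟩

lemma abs_le_tvNorm (hC : IsSetAlg C) {μ : Set Ω → ℝ} (hμ : BddVar C μ) {A : Set Ω}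
    (hA : A ∈ C) : |μ A| ≤ tvNorm C μ :=
  (Finset.single_le_sum (f := fun E => |μ E|) (fun _ _ => abs_nonneg _)
    (Finset.mem_insert_self A {Aᶜ})).trans (sum_abs_le_tvNorm hμ (hC.isPartition_pair hA))

lemma tvNorm_eq_of_nonneg (hC : IsSetAlg C) {μ : Set Ω → ℝ} (hμ : IsFinAdd C μ)
    (hpos : ∀ A ∈ C, 0 ≤ μ A) : tvNorm C μ = μ univ := by
  have hsums : varSums C μ univ = {μ univ} := by
    refine Subset.antisymm ?_ ?_
    · rintro x ⟨π, ⟨hπC, hπd, hπu⟩, rfl⟩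
      rw [mem_singleton_iff, ← hπu, ← hμ.sum_eq_sUnion hC hπC hπd]
      exact Finset.sum_congr rfl fun E hE => abs_of_nonneg (hpos E (hπC E hE))
    · rintro x rfl
      refine ⟨{univ}, ⟨by simpa using hC.univ_mem, by simp, by simp⟩, ?_⟩
      rw [Finset.sum_singleton, abs_of_nonneg (hpos _ hC.univ_mem)]
  rw [tvNorm, totalVar, hsums, csSup_singleton]

lemma mem_upperBounds_varSums_of_tendsto {ι : Type*} {l : Filter ι} [l.NeBot]
    {F : ι → Set Ω → ℝ} {μ : Set Ω → ℝ} {M : ℝ} (hF : ∀ a, BddVar C (F a))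
    (hM : ∀ a, tvNorm C (F a) ≤ M) (hlim : ∀ A ∈ C, Tendsto (fun a => F a A) l (𝓝 (μ A))) :
    M ∈ upperBounds (varSums C μ univ) := by
  rintro x ⟨π, hπ, rfl⟩
  exact le_of_tendsto' (tendsto_finsetSum π fun E hE => (hlim E (hπ.1 E hE)).abs)
    fun a => (sum_abs_le_tvNorm (hF a) hπ).trans (hM a)

/-- `ba(C)` with the total variation norm has property (P): every
increasing (in the pointwise order on `C`), norm bounded net in `ba(C)` has a least
upper bound in `ba(C)` to which it converges in the total variation norm. -/
theorem ba_propertyP {Ω : Type} (C : Set (Set Ω)) (hC : IsSetAlg C)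
    (ι : Type) [Preorder ι] [IsDirected ι (· ≤ ·)] [Nonempty ι]
    (F : ι → Set Ω → ℝ) (hF : ∀ a, Memba C (F a))
    (hmono : ∀ a b : ι, a ≤ b → ∀ A ∈ C, F a A ≤ F b A)
    (hbdd : ∃ M : ℝ, ∀ a, tvNorm C (F a) ≤ M) :
    ∃ μ : Set Ω → ℝ, Memba C μ ∧
      (∀ a, ∀ A ∈ C, F a A ≤ μ A) ∧
      (∀ ν : Set Ω → ℝ, Memba C ν → (∀ a, ∀ A ∈ C, F a A ≤ ν A) →
        ∀ A ∈ C, μ A ≤ ν A) ∧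
      Tendsto (fun a => tvNorm C (fun A => μ A - F a A)) atTop (nhds 0) := by
  obtain ⟨M, hM⟩ := hbdd
  have hbddA : ∀ A ∈ C, BddAbove (range fun a => F a A) := fun A hA =>
    ⟨M, forall_mem_range.2 fun a =>
      (le_abs_self _).trans ((abs_le_tvNorm hC (hF a).2 hA).trans (hM a))⟩
  have hlim : ∀ A ∈ C, Tendsto (fun a => F a A) atTop (𝓝 (⨆ a, F a A)) := fun A hA =>
    tendsto_atTop_ciSup (fun a b hab => hmono a b hab A hA) (hbddA A hA)
  have hμ : IsFinAdd C (fun A => ⨆ a, F a A) := IsFinAdd.of_tendsto hC (fun a => (hF a).1) hlim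
  have hub : ∀ a, ∀ A ∈ C, F a A ≤ ⨆ b, F b A := fun a A hA => le_ciSup (hbddA A hA) a
  refine ⟨fun A => ⨆ a, F a A,
    ⟨hμ, M, mem_upperBounds_varSums_of_tendsto (fun a => (hF a).2) hM hlim⟩, hub,
    fun ν _ hν A hA => ciSup_le fun a => hν a A hA, ?_⟩
  have hnorm : ∀ a, tvNorm C (fun A => (⨆ b, F b A) - F a A) = (⨆ b, F b univ) - F a univ :=
    fun a => tvNorm_eq_of_nonneg hC (hμ.sub (hF a).1) fun A hA => sub_nonneg.2 (hub a A hA)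
  simpa only [hnorm, sub_self] using (hlim univ hC.univ_mem).const_sub (⨆ b, F b univ)
end
end
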